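/- arXiv:1303.1613 — 2 statements merged into one kernel-verified Lean document; each statement's English description precedes it below -/
import Mathlib

section
/- In the algebra M of infinite binary sequences with Δ as defined, the Löb identity holds: Δ(Δα ⊃ α) = Δα for every α. -/
/-- The algebra of infinite binary sequences. -/
abbrev M := ℕ → Bool

/-- Pointwise boolean operations. -/
def mAnd (a b : M) : M := fun n => a n && b n
def mOr (a b : M) : M := fun n => a n || b n
def mImp (a b : M) : M := fun n => !a n || b n
def mNeg (a : M) : M := fun n => !a n
def mIff (a b : M) : M := fun n => a n == b n
def mZero : M := fun _ => false
def mOne : M := fun _ => true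

/-- The operator Δ: (Δα)(0)=1 and (Δα)(n+1)=α(0)∧⋯∧α(n). -/
def Delta (a : M) : M := fun n => decide (∀ k, k < n → a k = true)

def box (a : M) : M := mAnd a (Delta a)
def nabla (a : M) : M := box (mNeg (box (mNeg (box a))))

/-! Both sides satisfy the recursion `x 0 = 1`, `x (n+1) = x n ∧ α n`: on the left,
`Δα(n) ∧ (Δα(n) ⊃ α(n)) = Δα(n) ∧ α(n)` once the two sides agree at `n`. -/

@[simp]
theorem Delta_zero (a : M) : Delta a 0 = true := by
  simp [Delta]

theorem Delta_succ (a : M) (n : ℕ) : Delta a (n + 1) = (Delta a n && a n) := by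
  simp only [Delta, Nat.forall_lt_succ_right, Bool.decide_and, Bool.decide_eq_true]

/-- Löb identity: Δ(Δα ⊃ α) = Δα. -/
theorem stmt2 (a : M) : Delta (mImp (Delta a) a) = Delta a := by
  funext n
  induction n with
  | zero => simp
  | succ n ih =>
    rw [Delta_succ, Delta_succ, ih, mImp]
    cases Delta a n <;> rfl
end

section
/- Fix i ≥ 1 and an element c of M with c ≠ ¬Δⁱ0. Define F_¬(p,q) = (∇¬(p ↔ q) ∧ ((¬p ↔ q) ↔ c)) ∨ (∇(p ↔ q) ∧ ¬Δⁱ0). Then for all p, q in M: ¬p = q if and only if F_¬(p,q) = c. -/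
/-! The idea: `□a` vanishes as soon as `a 0` is false, and fixes constant sequences, so `∇a` is
the constant sequence `a 0`. Hence `F_¬(p,q)` is `(¬p ↔ q) ↔ c` when `p 0 ≠ q 0` and `¬Δⁱ0`
otherwise; the latter differs from `c`, and `(x ↔ c) = c` forces `x = 1`. -/

lemma box_apply_zero (a : M) : box a 0 = a 0 := by
  simp [box, mAnd, Delta]

lemma box_eq_false_of_apply_zero {a : M} (h : a 0 = false) : box a = fun _ => false := by
  funext n
  cases n with
  | zero => simp [box, mAnd, Delta, h]
  | succ m => simpa [box, mAnd, Delta] using fun _ => ⟨0, m.zero_le, h⟩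

lemma box_const (b : Bool) : box (fun _ => b) = fun _ => b := by
  cases b
  · exact box_eq_false_of_apply_zero rfl
  · funext n; simp [box, mAnd, Delta]

lemma box_mNeg_box (a : M) : box (mNeg (box a)) = fun _ => !a 0 := by
  cases h : a 0
  · rw [box_eq_false_of_apply_zero h]
    exact box_const true
  · exact box_eq_false_of_apply_zero (by simp [mNeg, box_apply_zero, h])

lemma nabla_eq_const (a : M) : nabla a = fun _ => a 0 := by
  rw [nabla, box_mNeg_box]
  simp [mNeg, box_apply_zero]

lemma mIff_eq_mOne_iff {a b : M} : mIff a b = mOne ↔ a = b := by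
  simp [funext_iff, mIff, mOne]

lemma mIff_eq_right_iff {a b : M} : mIff a b = b ↔ a = mOne := by
  simp only [funext_iff, mIff, mOne]
  exact forall_congr' fun n => by cases a n <;> cases b n <;> decide

lemma mOr_mAnd_const_eq_ite (b : Bool) (x y : M) :
    mOr (mAnd (fun _ => !b) x) (mAnd (fun _ => b) y) = if b then y else x := by
  cases b <;> funext n <;> simp [mOr, mAnd]

theorem stmt14_general (i : ℕ) (c : M) (hc : c ≠ mNeg (Delta^[i] mZero))
    (p q : M) :
    mNeg p = q ↔
      mOr (mAnd (nabla (mNeg (mIff p q))) (mIff (mIff (mNeg p) q) c))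
          (mAnd (nabla (mIff p q)) (mNeg (Delta^[i] mZero))) = c := by
  rw [nabla_eq_const, nabla_eq_const, show mNeg (mIff p q) 0 = !mIff p q 0 from rfl,
    mOr_mAnd_const_eq_ite]
  by_cases h0 : p 0 = q 0
  · rw [if_pos (by simpa [mIff] using h0)]
    refine iff_of_false (fun h => ?_) hc.symm
    simpa [mNeg, h0] using congrFun h 0
  · rw [if_neg (by simpa [mIff] using h0), mIff_eq_right_iff, mIff_eq_mOne_iff]

/-- ¬p = q iff F_¬(p,q) = c, where c ≠ ¬Δⁱ0. -/
theorem stmt14 (i : ℕ) (hi : 1 ≤ i) (c : M) (hc : c ≠ mNeg (Delta^[i] mZero))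
    (p q : M) :
    mNeg p = q ↔
      mOr (mAnd (nabla (mNeg (mIff p q))) (mIff (mIff (mNeg p) q) c))
          (mAnd (nabla (mIff p q)) (mNeg (Delta^[i] mZero))) = c :=
  stmt14_general i c hc p q
end
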